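/- arXiv:2504.07752 — 6 statements merged into one kernel-verified Lean document; each statement's English description precedes it below -/
import Mathlib

section
/- Let m ≥ 1 and let X_0, X_1, …, X_N be vectors in ℝ^m such that (1) X_0 = 0; (2) for each t with 1 ≤ t ≤ N, X_t and X_{t-1} differ in exactly one coordinate, and in that coordinate by exactly +1 or −1; (3) for every coordinate i ∈ {1,…,m} there exists some t such that X_t and X_{t-1} differ in the i-th coordinate. Then there exist indices t_1, …, t_m ∈ {0,…,N} such that the vectors X_{t_1}, …, X_{t_m} form a basis of ℝ^m. -/
/-! Where coordinate `i` changes at step `t`, `X t - X (t - 1)` is a nonzero multiple of the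
`i`-th unit vector, so the visited points `X 0, …, X N` span `ℝ^m`; any spanning family of an
`m`-dimensional space contains a basis indexed by `Fin m`. -/

open Submodule

theorem Pi.sub_eq_single_of_forall_ne {ι R : Type*} [DecidableEq ι] [AddGroup R]
    {x y : ι → R} {i : ι} (h : ∀ j, j ≠ i → x j = y j) :
    x - y = Pi.single i (x i - y i) := by
  ext j
  by_cases hj : j = i
  · subst hj; simp
  · simp [Pi.single_eq_of_ne hj, h j hj]

theorem Pi.single_one_mem_span_pair {ι K : Type*} [DecidableEq ι] [Field K]
    {x y : ι → K} {i : ι} (h : ∀ j, j ≠ i → x j = y j) (hi : x i ≠ y i) :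
    Pi.single i 1 ∈ span K {x, y} := by
  have hsingle : Pi.single i (1 : K) = (x i - y i)⁻¹ • (x - y) := by
    rw [Pi.sub_eq_single_of_forall_ne h, ← Pi.single_smul, smul_eq_mul,
      inv_mul_cancel₀ (sub_ne_zero.mpr hi)]
  rw [hsingle]
  exact smul_mem _ _ (sub_mem (subset_span (by simp)) (subset_span (by simp)))

theorem exists_fin_linearIndependent_span_eq_top {K V ι : Type*} [Field K] [AddCommGroup V]
    [Module K V] [FiniteDimensional K V] {n : ℕ} (hn : Module.finrank K V = n) {v : ι → V}
    (hv : span K (Set.range v) = ⊤) :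
    ∃ ts : Fin n → ι, LinearIndependent K (v ∘ ts) ∧ span K (Set.range (v ∘ ts)) = ⊤ := by
  obtain ⟨κ, a, -, hspan, hli⟩ := exists_linearIndependent' K v
  let b : Module.Basis κ K V := .mk hli (by rw [hspan, hv])
  have : Fintype κ := b.fintypeIndexOfRankLtAleph0 (Module.rank_lt_aleph0 K V)
  let e : Fin n ≃ κ :=
    (Fintype.equivFinOfCardEq (by rw [← hn, Module.finrank_eq_card_basis b])).symm
  refine ⟨a ∘ e, hli.comp e e.injective, ?_⟩
  rw [← Function.comp_assoc, EquivLike.range_comp, hspan, hv]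

theorem stmt0_general (m N : ℕ) (X : ℕ → Fin m → ℝ)
    (hstep : ∀ t, 1 ≤ t → t ≤ N → ∃ i : Fin m,
      (X t i - X (t - 1) i = 1 ∨ X t i - X (t - 1) i = -1) ∧
      ∀ j : Fin m, j ≠ i → X t j = X (t - 1) j)
    (hall : ∀ i : Fin m, ∃ t, 1 ≤ t ∧ t ≤ N ∧ X t i ≠ X (t - 1) i) :
    ∃ ts : Fin m → ℕ, (∀ i, ts i ≤ N) ∧
      LinearIndependent ℝ (fun i => X (ts i)) ∧
      Submodule.span ℝ (Set.range fun i => X (ts i)) = ⊤ := by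
  let v : {t // t ≤ N} → Fin m → ℝ := fun t => X t
  have hv : span ℝ (Set.range v) = ⊤ := by
    rw [eq_top_iff, ← (Pi.basisFun ℝ (Fin m)).span_eq, span_le]
    rintro _ ⟨i, rfl⟩
    rw [Pi.basisFun_apply]
    obtain ⟨t, ht1, htN, hne⟩ := hall i
    obtain ⟨j, -, hj⟩ := hstep t ht1 htN
    obtain rfl : i = j := by_contra fun hij => hne (hj i hij)
    have hpair : {X t, X (t - 1)} ⊆ Set.range v := by
      rintro _ (rfl | rfl)
      exacts [⟨⟨t, htN⟩, rfl⟩, ⟨⟨t - 1, (Nat.sub_le t 1).trans htN⟩, rfl⟩]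
    exact span_mono hpair (Pi.single_one_mem_span_pair hj hne)
  obtain ⟨ts, hli, hspan⟩ :=
    exists_fin_linearIndependent_span_eq_top (Module.finrank_fin_fun ℝ) hv
  exact ⟨fun i => ts i, fun i => (ts i).2, hli, hspan⟩

/-- If `X 0 = 0`, consecutive vectors differ in exactly one coordinate by `±1`,
and every coordinate changes at some step, then some subfamily `X (ts 1), …, X (ts m)`
forms a basis of `ℝ^m`. -/
theorem stmt0 (m N : ℕ) (hm : 1 ≤ m) (X : ℕ → Fin m → ℝ)
    (h0 : X 0 = 0)
    (hstep : ∀ t, 1 ≤ t → t ≤ N → ∃ i : Fin m,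
      (X t i - X (t - 1) i = 1 ∨ X t i - X (t - 1) i = -1) ∧
      ∀ j : Fin m, j ≠ i → X t j = X (t - 1) j)
    (hall : ∀ i : Fin m, ∃ t, 1 ≤ t ∧ t ≤ N ∧ X t i ≠ X (t - 1) i) :
    ∃ ts : Fin m → ℕ, (∀ i, ts i ≤ N) ∧
      LinearIndependent ℝ (fun i => X (ts i)) ∧
      Submodule.span ℝ (Set.range fun i => X (ts i)) = ⊤ :=
  stmt0_general m N X hstep hall
end

section
/- Let r, n be integers with 0 ≤ r ≤ n and let g(x,y) = Σ_{j=0}^{r} Σ_{k=0}^{n−r} g_{j,k} x^j y^k be a bivariate polynomial with real coefficients satisfying the skew-symmetry g(x,y) = −x^r · g(1/x, y) (i.e., g_{j,k} = −g_{r−j,k} for all j,k). Suppose that the polynomial f(x,y) := Σ_{j,k} g_{j,k} (x+y)^j (1+x)^{r−j} y^k is identically zero. Then g is identically zero. -/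
/-!
Evaluating at a point `(x, y)` with `1 + x ≠ 0` gives
`f(x, y) = (1 + x)^r · G((x + y)/(1 + x), y)` with `G(s, t) = ∑ g_{j,k} s^j t^k`, and every
`(s, t)` with `s ≠ 1`, `t ≠ 1` arises this way, from `x = (s - t)/(1 - s)`. So `f = 0` forces `G`
to vanish off two lines, hence `G = 0` as a polynomial.
-/

open MvPolynomial Finset

section Vanishing

variable {K : Type*} [Field K] [Infinite K]

theorem coeff_eq_zero_of_sum_mul_pow_eq_zero_of_ne {m : ℕ} {c : ℕ → K} (a : K)
    (h : ∀ x ≠ a, ∑ i ∈ range m, c i * x ^ i = 0) {i : ℕ} (hi : i < m) : c i = 0 := by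
  set P : Polynomial K := ∑ i ∈ range m, Polynomial.monomial i (c i)
  have hP : P = 0 := by
    refine Polynomial.eq_zero_of_infinite_isRoot P ((Set.finite_singleton a).infinite_compl.mono ?_)
    intro x hx
    simpa [P, Polynomial.eval_finsetSum, Polynomial.eval_monomial] using h x hx
  simpa [P, Polynomial.finsetSum_coeff, Polynomial.coeff_monomial, hi] using
    congrArg (Polynomial.coeff · i) hP

theorem coeff_eq_zero_of_sum_sum_mul_pow_eq_zero_of_ne {m l : ℕ} {c : ℕ → ℕ → K} (a b : K)
    (h : ∀ s ≠ a, ∀ t ≠ b, ∑ j ∈ range m, ∑ k ∈ range l, c j k * s ^ j * t ^ k = 0)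
    {j k : ℕ} (hj : j < m) (hk : k < l) : c j k = 0 := by
  refine coeff_eq_zero_of_sum_mul_pow_eq_zero_of_ne b (fun t ht => ?_) hk
  refine coeff_eq_zero_of_sum_mul_pow_eq_zero_of_ne (c := fun j => ∑ k ∈ range l, c j k * t ^ k) a
    (fun s hs => ?_) hj
  rw [← h s hs t ht]
  refine sum_congr rfl fun j _ => ?_
  rw [sum_mul]
  exact sum_congr rfl fun k _ => by ring

end Vanishing

theorem eval_sum_mul_add_pow_mul_one_add_pow {R : Type*} [CommSemiring R] (g : ℕ → ℕ → R)
    (r l : ℕ) {x y s : R} (hs : x + y = s * (1 + x)) :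
    eval ![x, y] (∑ j ∈ range (r + 1), ∑ k ∈ range l,
        C (g j k) * (X 0 + X 1) ^ j * (1 + X 0) ^ (r - j) * X 1 ^ k) =
      (1 + x) ^ r * ∑ j ∈ range (r + 1), ∑ k ∈ range l, g j k * s ^ j * y ^ k := by
  simp only [map_sum, mul_sum]
  refine sum_congr rfl fun j hj => sum_congr rfl fun k _ => ?_
  have hpow : (1 + x) ^ r = (1 + x) ^ j * (1 + x) ^ (r - j) := by
    rw [← pow_add, Nat.add_sub_cancel' (Nat.lt_succ_iff.mp (mem_range.mp hj))]
  simp only [eval_mul, eval_pow, eval_add, eval_C, eval_X, map_one, Matrix.cons_val_zero,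
    Matrix.cons_val_one, hs, mul_pow, hpow]
  ring

theorem exists_add_eq_mul_one_add {K : Type*} [Field K] {s t : K} (hs : s ≠ 1) (ht : t ≠ 1) :
    ∃ x : K, x + t = s * (1 + x) ∧ 1 + x ≠ 0 := by
  have hs' : 1 - s ≠ 0 := sub_ne_zero.mpr hs.symm
  have ht' : 1 - t ≠ 0 := sub_ne_zero.mpr ht.symm
  refine ⟨(s - t) / (1 - s), ?_, ?_⟩
  · field_simp
    ring
  · rw [show 1 + (s - t) / (1 - s) = (1 - t) / (1 - s) by field_simp; ring]
    exact div_ne_zero ht' hs'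

theorem stmt4_general (n r : ℕ) (g : ℕ → ℕ → ℝ)
    (hsupp : ∀ j k, (r < j ∨ n - r < k) → g j k = 0)
    (hf : (∑ j ∈ range (r + 1), ∑ k ∈ range (n - r + 1),
        C (g j k) * (X 0 + X 1) ^ j * (1 + X 0) ^ (r - j) * (X 1) ^ k
        : MvPolynomial (Fin 2) ℝ) = 0) :
    ∀ j k, g j k = 0 := by
  have hG : ∀ s ≠ (1 : ℝ), ∀ t ≠ (1 : ℝ),
      ∑ j ∈ range (r + 1), ∑ k ∈ range (n - r + 1), g j k * s ^ j * t ^ k = 0 := by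
    intro s hs t ht
    obtain ⟨x, hx, hx0⟩ := exists_add_eq_mul_one_add hs ht
    have h := congrArg (eval ![x, t]) hf
    rw [eval_sum_mul_add_pow_mul_one_add_pow g r _ hx, map_zero] at h
    exact (mul_eq_zero.mp h).resolve_left (pow_ne_zero r hx0)
  intro j k
  by_cases hout : r < j ∨ n - r < k
  · exact hsupp j k hout
  · push Not at hout
    exact coeff_eq_zero_of_sum_sum_mul_pow_eq_zero_of_ne 1 1 hG (by omega) (by omega)

/-- If `g` has coefficients supported in `{0,…,r} × {0,…,n−r}`,
satisfies the skew-symmetry `g_{j,k} = −g_{r−j,k}`, and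
`∑_{j,k} g_{j,k} (x+y)^j (1+x)^{r−j} y^k` is the zero polynomial, then `g = 0`. -/
theorem stmt4 (n r : ℕ) (hrn : r ≤ n) (g : ℕ → ℕ → ℝ)
    (hsupp : ∀ j k, (r < j ∨ n - r < k) → g j k = 0)
    (hskew : ∀ j ≤ r, ∀ k, g j k = -g (r - j) k)
    (hf : (∑ j ∈ range (r + 1), ∑ k ∈ range (n - r + 1),
        C (g j k) * (X 0 + X 1) ^ j * (1 + X 0) ^ (r - j) * (X 1) ^ k
        : MvPolynomial (Fin 2) ℝ) = 0) :
    ∀ j k, g j k = 0 :=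
  stmt4_general n r g hsupp hf
end

section
/- For all integers n, r, j, k with 1 ≤ j ≤ (r−1)/2 and 0 ≤ k ≤ (n−r−1)/2 (in particular n > r ≥ 2j+1), the quantity C(n−k−r+j, j) · C(k+r−1−j, k) − C(n−k−r+j−1, j−1) · C(k+r−j, k) is strictly positive, where C(a,b) denotes the binomial coefficient. -/
/-!
The absorption identities `C(a, j) * j = a * C(a-1, j-1)` and `C(m, k) * (m+1) = C(m+1, k) * (m+1-k)`
show that the subtracted product is the leading one times `(j / a) * ((m+1) / (m+1-k))`.
With `a = n-k-r+j` and `m + 1 = k+r-j`, positivity thus reduces to the elementary inequality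
`j * (k + (r-j)) < (n-k-r+j) * (r-j)`, which holds because `r - j > j` and `n - k - r > k`.
-/

namespace Nat

theorem choose_mul_choose_succ_lt_succ_choose_mul_choose {a j m k : ℕ} (hj : j ≤ a)
    (h : (j + 1) * (m + 1) < (a + 1) * (m + 1 - k)) :
    a.choose j * (m + 1).choose k < (a + 1).choose (j + 1) * m.choose k := by
  have hk : k ≤ m := by
    by_contra hkm
    rw [show m + 1 - k = 0 by omega, mul_zero] at h
    exact Nat.not_lt_zero _ h
  have hpos : 0 < (a + 1).choose (j + 1) * m.choose k :=
    Nat.mul_pos (Nat.choose_pos (by omega)) (Nat.choose_pos hk)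
  apply Nat.lt_of_mul_lt_mul_right (a := (a + 1) * (m + 1 - k))
  calc a.choose j * (m + 1).choose k * ((a + 1) * (m + 1 - k))
      = ((a + 1) * a.choose j) * ((m + 1).choose k * (m + 1 - k)) := by ring
    _ = ((a + 1).choose (j + 1) * (j + 1)) * (m.choose k * (m + 1)) := by
        rw [add_one_mul_choose_eq, choose_mul_succ_eq]
    _ = ((a + 1).choose (j + 1) * m.choose k) * ((j + 1) * (m + 1)) := by ring
    _ < ((a + 1).choose (j + 1) * m.choose k) * ((a + 1) * (m + 1 - k)) :=
        Nat.mul_lt_mul_of_pos_left h hpos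

end Nat

/-- For `1 ≤ j ≤ (r−1)/2` and `0 ≤ k ≤ (n−r−1)/2`,
`C(n−k−r+j, j)·C(k+r−1−j, k) − C(n−k−r+j−1, j−1)·C(k+r−j, k) > 0`. -/
theorem stmt6 (n r j k : ℕ) (hj : 1 ≤ j) (hjr : 2 * j + 1 ≤ r)
    (hk : 2 * k + 1 + r ≤ n) :
    0 < (Nat.choose (n - k - r + j) j : ℤ) * Nat.choose (k + r - 1 - j) k
        - Nat.choose (n - k - r + j - 1) (j - 1) * Nat.choose (k + r - j) k := by
  have hratio : (j - 1 + 1) * (k + r - 1 - j + 1)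
      < (n - k - r + j - 1 + 1) * (k + r - 1 - j + 1 - k) := by
    obtain ⟨d, rfl⟩ : ∃ d, r = j + d := ⟨r - j, by omega⟩
    obtain ⟨e, rfl⟩ : ∃ e, n = k + (j + d) + e := ⟨n - k - (j + d), by omega⟩
    rw [show j - 1 + 1 = j by omega, show k + (j + d) - 1 - j + 1 = k + d by omega,
      show k + (j + d) + e - k - (j + d) + j - 1 + 1 = e + j by omega,
      show k + d - k = d by omega]
    nlinarith
  have key := Nat.choose_mul_choose_succ_lt_succ_choose_mul_choose (by omega) hratio
  rw [show n - k - r + j - 1 + 1 = n - k - r + j by omega, show j - 1 + 1 = j by omega,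
    show k + r - 1 - j + 1 = k + r - j by omega] at key
  exact sub_pos.mpr (by exact_mod_cast key)
end

section
/- Let V = {v_1, …, v_n} ⊂ ℝ^r be a vector configuration in general position, and let W ⊆ V with |W| ≤ r−1. Then W is extremal (i.e., there is a nonzero u ∈ ℝ^r with ⟨u,v⟩ = 0 for all v ∈ W and ⟨u,v⟩ > 0 for all v ∈ V∖W) if and only if there is no nontrivial linear dependence Σ_{v∈V} λ_v v = 0 with {v : λ_v < 0} ⊆ W. -/
/-!
If `u` vanishes on `W` and is positive on `V ∖ W`, pairing `u` with a dependence whose negative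
coefficients lie in `W` gives a sum of nonnegative terms equal to zero, so the dependence is
supported on `W`; extending `W` to `r` vectors, general position forces it to vanish.

Conversely, let `K` be the span of `W` and `H` the convex hull of `V ∖ W`. A point of `H + K`
equal to `0` is exactly a nontrivial dependence with negative coefficients only in `W`. If there is
none, the compact-plus-closed convex set `H + K` is strictly separated from `0` by a functional
`f`; being bounded below on translates of `K`, `f` vanishes on `K`, and it is positive on `H`.
-/

open Finset
open scoped Pointwise

section Dependence

variable {ι E : Type*} [Fintype ι]

theorem Module.Dual.apply_eq_zero_of_forall_lt_apply_add_smul {𝕜 : Type*} [Field 𝕜]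
    [LinearOrder 𝕜] [IsStrictOrderedRing 𝕜] [AddCommGroup E] [Module 𝕜 E]
    (f : Module.Dual 𝕜 E) (x y : E) (s : 𝕜) (h : ∀ t : 𝕜, s < f (x + t • y)) : f y = 0 := by
  by_contra hy
  have := h ((s - f x) / f y)
  simp [div_mul_cancel₀ _ hy] at this

theorem LinearIndepOn.eq_zero_of_sum_smul_eq_zero {R : Type*} [Ring R] [AddCommGroup E]
    [Module R E] {v : ι → E} {s : Finset ι} (hs : LinearIndepOn R v (s : Set ι)) {lam : ι → R}
    (hlam : ∀ i ∉ s, lam i = 0) (h : ∑ i, lam i • v i = 0) : lam = 0 := by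
  have hsum : ∑ i ∈ s, lam i • v i = 0 := by
    rw [← h]
    exact sum_subset (subset_univ s) fun i _ hi => by rw [hlam i hi, zero_smul]
  funext i
  by_cases hi : i ∈ s
  · exact linearIndepOn_finset_iff.mp hs lam hsum i hi
  · exact hlam i hi

theorem eq_zero_of_dual_pos_of_sum_smul_eq_zero [AddCommGroup E] [Module ℝ E] {v : ι → E}
    {W : Finset ι} (f : Module.Dual ℝ E) (hfW : ∀ i ∈ W, f (v i) = 0)
    (hf : ∀ i ∉ W, 0 < f (v i)) {lam : ι → ℝ} (hdep : ∑ i, lam i • v i = 0)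
    (hneg : ∀ i, lam i < 0 → i ∈ W) : ∀ i ∉ W, lam i = 0 := by
  have hterm : ∀ i ∈ univ, 0 ≤ lam i * f (v i) := by
    intro i _
    by_cases hi : i ∈ W
    · rw [hfW i hi, mul_zero]
    · exact mul_nonneg (not_lt.mp (mt (hneg i) hi)) (hf i hi).le
  have hsum : ∑ i, lam i * f (v i) = 0 := by
    simpa only [map_sum, map_smul, smul_eq_mul, map_zero] using congrArg f hdep
  intro i hi
  exact (mul_eq_zero.mp ((sum_eq_zero_iff_of_nonneg hterm).mp hsum i (mem_univ i))).resolve_right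
    (hf i hi).ne'

theorem exists_sum_smul_eq_zero_of_stdSimplex [DecidableEq ι] [AddCommGroup E] [Module ℝ E]
    (v : ι → E) {W : Finset ι} {μ : {i // i ∉ W} → ℝ} (hμ : μ ∈ stdSimplex ℝ {i // i ∉ W})
    (c : {i // i ∈ W} → ℝ) (hsum : ∑ i, μ i • v i + ∑ i, c i • v i = 0) :
    ∃ lam : ι → ℝ, lam ≠ 0 ∧ ∑ i, lam i • v i = 0 ∧ ∀ i, lam i < 0 → i ∈ W := by
  set lam : ι → ℝ := fun i => if hi : i ∈ W then c ⟨i, hi⟩ else μ ⟨i, hi⟩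
  have hlamW : ∀ i : {i // i ∈ W}, lam i = c i := fun i => dif_pos i.2
  have hlamWc : ∀ i : {i // i ∉ W}, lam i = μ i := fun i => dif_neg i.2
  refine ⟨lam, fun hlam => ?_, ?_, fun i hi => ?_⟩
  · have hμ0 : μ = 0 := funext fun i => by rw [← hlamWc, hlam, Pi.zero_apply, Pi.zero_apply]
    simpa [hμ0] using hμ.2
  · rw [← Fintype.sum_subtype_add_sum_subtype (· ∈ W), ← hsum, add_comm]
    simp only [hlamW, hlamWc]
    convert rfl -- the two sums over `W` carry different `Fintype` instances
  · by_contra hiW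
    exact (hμ.1 ⟨i, hiW⟩).not_gt (hlamWc ⟨i, hiW⟩ ▸ hi)

theorem exists_dual_of_not_exists_sum_smul_eq_zero [NormedAddCommGroup E] [NormedSpace ℝ E]
    [FiniteDimensional ℝ E] (v : ι → E) {W : Finset ι} {i₀ : ι} (hi₀ : i₀ ∉ W)
    (h : ¬ ∃ lam : ι → ℝ, lam ≠ 0 ∧ ∑ i, lam i • v i = 0 ∧ ∀ i, lam i < 0 → i ∈ W) :
    ∃ f : Module.Dual ℝ E, (∀ i ∈ W, f (v i) = 0) ∧ ∀ i ∉ W, 0 < f (v i) := by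
  classical
  set H : Set E :=
    Fintype.linearCombination ℝ (fun i : {i // i ∉ W} => v i) '' stdSimplex ℝ {i // i ∉ W}
  set K := Submodule.span ℝ (Set.range fun i : {i // i ∈ W} => v i)
  have hvH : ∀ i (hi : i ∉ W), v i ∈ H := fun i hi =>
    ⟨Pi.single ⟨i, hi⟩ 1, single_mem_stdSimplex ℝ _, by simp⟩
  have hclosed : IsClosed (H + (K : Set E)) :=
    K.closed_of_finiteDimensional.add_left_of_isCompact
      ((isCompact_stdSimplex ℝ _).image (LinearMap.continuous_of_finiteDimensional _))
  have hconvex : Convex ℝ (H + (K : Set E)) :=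
    ((convex_stdSimplex ℝ _).linear_image _).add K.convex
  have h0 : (0 : E) ∉ H + (K : Set E) := by
    rintro ⟨_, ⟨μ, hμ, rfl⟩, _, hk, hsum⟩
    obtain ⟨c, rfl⟩ := (Submodule.mem_span_range_iff_exists_fun ℝ).mp hk
    exact h (exists_sum_smul_eq_zero_of_stdSimplex v hμ c hsum)
  obtain ⟨g, s, hg0, hgs⟩ := geometric_hahn_banach_point_closed hconvex hclosed h0
  rw [map_zero] at hg0
  refine ⟨g.toLinearMap, fun i hi => ?_, fun i hi => ?_⟩
  · refine Module.Dual.apply_eq_zero_of_forall_lt_apply_add_smul _ (v i₀) (v i) s fun t => ?_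
    exact hgs _ (Set.add_mem_add (hvH i₀ hi₀)
      (K.smul_mem t (Submodule.subset_span ⟨⟨i, hi⟩, rfl⟩)))
  · exact hg0.trans (hgs (v i) (by simpa using Set.add_mem_add (hvH i hi) K.zero_mem))

end Dependence

theorem stmt14_general (n r : ℕ) (hrn : r ≤ n) (V : Fin n → Fin r → ℝ)
    (hgp : ∀ s : Finset (Fin n), s.card = r →
      LinearIndependent ℝ (fun i : {x // x ∈ s} => V i))
    (W : Finset (Fin n)) (hW : W.card < r) :
    (∃ u : Fin r → ℝ, u ≠ 0 ∧
        (∀ i ∈ W, (∑ j, u j * V i j) = 0) ∧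
        (∀ i ∉ W, 0 < ∑ j, u j * V i j)) ↔
    ¬ ∃ lam : Fin n → ℝ, lam ≠ 0 ∧ (∑ i, lam i • V i) = 0 ∧
        ∀ i, lam i < 0 → i ∈ W := by
  constructor
  · rintro ⟨u, -, huW, hu⟩ ⟨lam, hlam, hdep, hneg⟩
    obtain ⟨s, hWs, hs⟩ := exists_superset_card_eq hW.le (by simpa using hrn)
    have hoff := eq_zero_of_dual_pos_of_sum_smul_eq_zero (dotProductEquiv ℝ (Fin r) u) huW hu
      hdep hneg
    exact hlam (LinearIndepOn.eq_zero_of_sum_smul_eq_zero (hgp s hs)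
      (fun i hi => hoff i (mt (@hWs i) hi)) hdep)
  · intro h
    obtain ⟨i₀, -, hi₀⟩ := exists_mem_notMem_of_card_lt_card (s := W) (t := univ)
      (by rw [card_univ, Fintype.card_fin]; omega)
    obtain ⟨f, hfW, hf⟩ := exists_dual_of_not_exists_sum_smul_eq_zero V hi₀ h
    have hu : ∀ x, ∑ j, (dotProductEquiv ℝ (Fin r)).symm f j * x j = f x := fun x =>
      congrArg (· x) ((dotProductEquiv ℝ (Fin r)).apply_symm_apply f)
    refine ⟨(dotProductEquiv ℝ (Fin r)).symm f, fun h0 => ?_, ?_, ?_⟩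
    · have := hu (V i₀)
      simp only [h0, Pi.zero_apply, zero_mul, sum_const_zero] at this
      exact (hf i₀ hi₀).ne this
    · simpa only [hu] using hfW
    · simpa only [hu] using hf

/-- For a vector configuration in general position and `W ⊆ V` with
`|W| ≤ r−1`, the subset `W` is extremal iff there is no nontrivial linear
dependence `∑ λ_i v_i = 0` with `{i : λ_i < 0} ⊆ W`. -/
theorem stmt14 (n r : ℕ) (hr : 1 ≤ r) (hrn : r ≤ n) (V : Fin n → Fin r → ℝ)
    (hgp : ∀ s : Finset (Fin n), s.card = r →
      LinearIndependent ℝ (fun i : {x // x ∈ s} => V i))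
    (W : Finset (Fin n)) (hW : W.card < r) :
    (∃ u : Fin r → ℝ, u ≠ 0 ∧
        (∀ i ∈ W, (∑ j, u j * V i j) = 0) ∧
        (∀ i ∉ W, 0 < ∑ j, u j * V i j)) ↔
    ¬ ∃ lam : Fin n → ℝ, lam ≠ 0 ∧ (∑ i, lam i • V i) = 0 ∧
        ∀ i, lam i < 0 → i ∈ W :=
  stmt14_general n r hrn V hgp W hW
end

section
/- For the polynomial p(x) = 2·Σ_{i≥0} C(n, d−2i)·(x+1)^{d−2i} (the total-face-count polynomial of a simple arrangement of n hemispheres in S^d), the coefficient of x^s equals 2·C(n,s)·Σ_{i=0}^{d−s} C(n−s−1, i) for every 0 ≤ s ≤ d, provided n ≥ d+1. Equivalently: Σ_{i=0}^{d} (1+(−1)^i)·C(n, d−i)·C(d−i, s) = 2·C(n,s)·Σ_{i=0}^{d−s} C(n−s−1, i). -/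
/-!
The terms with `d - i < s` vanish, and on the others `C(n, k) C(k, s) = C(n, s) C(n - s, k - s)`
pulls out the factor `C(n, s)`, leaving `∑_{i ≤ t} (1 + (-1)^i) C(m + 1, t - i)` with
`t = d - s` and `m + 1 = n - s`. By Pascal's rule each surviving term
`2 C(m + 1, t - 2k) = 2 (C(m, t - 2k) + C(m, t - 2k - 1))` covers two consecutive summands of
`2 ∑_{j ≤ t} C(m, j)`.
-/

open Finset

theorem sum_range_one_add_neg_one_pow_mul_choose_succ (m t : ℕ) :
    ∑ i ∈ range (t + 1), (1 + (-1 : ℤ) ^ i) * (m + 1).choose (t - i)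
      = 2 * ∑ j ∈ range (t + 1), (m.choose j : ℤ) := by
  induction t using Nat.twoStepInduction with
  | zero => simp
  | one => simp [sum_range_succ]; ring
  | more t ih _ =>
    rw [sum_range_succ', sum_range_succ']
    simp only [Nat.add_sub_add_right, Nat.sub_zero, pow_succ, pow_zero, mul_neg, mul_one, neg_neg]
    rw [sum_range_succ _ (t + 2), sum_range_succ _ (t + 1)]
    have pascal : ((m + 1).choose (t + 2) : ℤ) = m.choose (t + 1) + m.choose (t + 2) := by
      exact_mod_cast Nat.choose_succ_succ' m (t + 1)
    linear_combination ih + 2 * pascal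

theorem sum_range_mul_choose_mul_choose (c : ℕ → ℤ) (n s t : ℕ) :
    ∑ i ∈ range (s + t + 1), c i * n.choose (s + t - i) * (s + t - i).choose s
      = n.choose s * ∑ i ∈ range (t + 1), c i * (n - s).choose (t - i) := by
  have h_tail : ∑ x ∈ range s,
      c (t + 1 + x) * n.choose (s + t - (t + 1 + x)) * (s + t - (t + 1 + x)).choose s = 0 :=
    sum_eq_zero fun x hx => by
      rw [Nat.choose_eq_zero_of_lt (n := s + t - (t + 1 + x)) (k := s) (by simp at hx; omega),
        Nat.cast_zero, mul_zero]
  rw [show s + t + 1 = t + 1 + s by omega, sum_range_add, h_tail, add_zero, mul_sum]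
  refine sum_congr rfl fun i hi => ?_
  have hit : i ≤ t := Nat.lt_succ_iff.mp (mem_range.mp hi)
  rw [mul_assoc, ← Nat.cast_mul, Nat.choose_mul (by omega), show s + t - i - s = t - i by omega]
  push_cast
  ring

/-- `∑_{i=0}^{d} (1+(−1)^i)·C(n, d−i)·C(d−i, s)
  = 2·C(n,s)·∑_{i=0}^{d−s} C(n−s−1, i)` for `0 ≤ s ≤ d` and `n ≥ d+1`. -/
theorem stmt16 (n d s : ℕ) (hs : s ≤ d) (hn : d + 1 ≤ n) :
    ∑ i ∈ range (d + 1),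
        (1 + (-1 : ℤ) ^ i) * Nat.choose n (d - i) * Nat.choose (d - i) s
    = 2 * Nat.choose n s * ∑ i ∈ range (d - s + 1), (Nat.choose (n - s - 1) i : ℤ) := by
  obtain ⟨t, rfl⟩ : ∃ t, d = s + t := ⟨d - s, by omega⟩
  obtain ⟨m, hm⟩ : ∃ m, n - s = m + 1 := ⟨n - s - 1, by omega⟩
  rw [sum_range_mul_choose_mul_choose, hm, sum_range_one_add_neg_one_pow_mul_choose_succ,
    Nat.add_sub_cancel_left, Nat.add_sub_cancel]
  ring
end

section
/- Let n ≥ r ≥ 0 and let T : ℝ^{(r+1)×(n−r+1)} → ℝ[x,y] be the linear map sending a matrix g = (g_{j,k}) to the polynomial Σ_{j=0}^r Σ_{k=0}^{n−r} g_{j,k}·(x+y)^j·(1+x)^{r−j}·y^k. Let 𝔊 be the subspace of matrices satisfying g_{j,k} = −g_{r−j,k} = −g_{j,n−r−k} = g_{r−j,n−r−k} for all j,k. Then the restriction of T to 𝔊 is injective, and hence the image T(𝔊) is a linear subspace of ℝ[x,y] of dimension ⌊(r+1)/2⌋·⌊(n−r+1)/2⌋. -/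
/-!
Substituting `x = -1` in `T(g)` kills every term with `j < r` and leaves
`(y - 1)^r · ∑_k g_{r,k} y^k`, so the last row of `g` vanishes; the remaining terms are all
divisible by `1 + x`, and induction on `r` shows that `T` is injective on all matrices.
A matrix in `𝔊` is odd under both index reversals, so it is determined by its entries with
`2j < r` and `2k < n - r`, and these can be prescribed freely.
-/

open MvPolynomial Finset

section PolyT

variable {R : Type*} [CommRing R]

noncomputable def polyT (r m : ℕ) (g : Fin (r + 1) → Fin (m + 1) → R) : MvPolynomial (Fin 2) R :=
  ∑ j : Fin (r + 1), ∑ k : Fin (m + 1),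
    C (g j k) * (X 0 + X 1) ^ (j : ℕ) * (1 + X 0) ^ (r - (j : ℕ)) * X 1 ^ (k : ℕ)

theorem polyT_succ_of_last_eq_zero {s m : ℕ} {g : Fin (s + 2) → Fin (m + 1) → R}
    (h : g (Fin.last (s + 1)) = 0) :
    polyT (s + 1) m g = (1 + X 0) * polyT s m (fun j => g j.castSucc) := by
  rw [polyT, Fin.sum_univ_castSucc, h, polyT, mul_sum]
  simp only [Pi.zero_apply, map_zero, zero_mul, sum_const_zero, add_zero, mul_sum]
  refine sum_congr rfl fun j _ => sum_congr rfl fun k _ => ?_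
  rw [Fin.val_castSucc, Nat.sub_add_comm j.is_le, pow_succ]
  ring

theorem eq_zero_of_sum_C_mul_X_pow_eq_zero {m : ℕ} {c : Fin (m + 1) → R}
    (h : ∑ k : Fin (m + 1), Polynomial.C (c k) * Polynomial.X ^ (k : ℕ) = 0) : c = 0 := by
  funext k
  simpa [Polynomial.finsetSum_coeff, Polynomial.coeff_C_mul_X_pow, Fin.val_inj] using
    congrArg (Polynomial.coeff · k) h

variable [IsDomain R]

theorem last_eq_zero_of_polyT_eq_zero {r m : ℕ} {g : Fin (r + 1) → Fin (m + 1) → R}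
    (h : polyT r m g = 0) : g (Fin.last r) = 0 := by
  have h' := congrArg (aeval ![(-1 : Polynomial R), Polynomial.X]) h
  simp only [polyT, map_sum, map_mul, map_pow, map_add, map_one, aeval_X, aeval_C, map_zero,
    Matrix.cons_val_zero, Matrix.cons_val_one, add_neg_cancel, Polynomial.algebraMap_eq] at h'
  rw [Fintype.sum_eq_single (Fin.last r) fun j hj => sum_eq_zero fun k _ => by
    rw [zero_pow (Nat.sub_ne_zero_of_lt (Fin.val_lt_last hj)), mul_zero, zero_mul]] at h'
  apply eq_zero_of_sum_C_mul_X_pow_eq_zero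
  have hX : (-1 + Polynomial.X : Polynomial R) ^ r ≠ 0 := pow_ne_zero _ fun h0 => by
    simpa using congrArg (Polynomial.eval 0) h0
  refine (mul_eq_zero.mp ?_).resolve_left hX
  rw [← h', mul_sum]
  refine sum_congr rfl fun k _ => ?_
  rw [Fin.val_last, Nat.sub_self, pow_zero]
  ring

theorem polyT_eq_zero {m : ℕ} : ∀ {r : ℕ} {g : Fin (r + 1) → Fin (m + 1) → R},
    polyT r m g = 0 → g = 0
  | 0, g, h => funext fun j => by
      obtain rfl : j = Fin.last 0 := Fin.ext (Nat.lt_one_iff.mp j.2)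
      exact last_eq_zero_of_polyT_eq_zero h
  | s + 1, g, h => by
    have hlast := last_eq_zero_of_polyT_eq_zero h
    rw [polyT_succ_of_last_eq_zero hlast] at h
    have h1X : (1 + X 0 : MvPolynomial (Fin 2) R) ≠ 0 := fun h0 => by
      simpa using congrArg (eval 0) h0
    have hinit := polyT_eq_zero ((mul_eq_zero.mp h).resolve_left h1X)
    funext j
    induction j using Fin.lastCases with
    | last => exact hlast
    | cast i => exact congrFun hinit i

end PolyT

section RevOdd

variable {K M : Type*} [Ring K] [AddCommGroup M] [Module K M]

def revOdd (t : ℕ) (N : Submodule K M) : Submodule K (Fin (t + 1) → M) where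
  carrier := {v | ∀ j, v j ∈ N ∧ v j.rev = -v j}
  add_mem' hv hw j := ⟨N.add_mem (hv j).1 (hw j).1, by simp [(hv j).2, (hw j).2, add_comm]⟩
  zero_mem' j := ⟨N.zero_mem, by simp⟩
  smul_mem' c v hv j := ⟨N.smul_mem c (hv j).1, by simp [(hv j).2]⟩

theorem mem_revOdd {t : ℕ} {N : Submodule K M} {v : Fin (t + 1) → M} :
    v ∈ revOdd t N ↔ ∀ j, v j ∈ N ∧ v j.rev = -v j := Iff.rfl

section HalfExtend

variable {t : ℕ} {N : Submodule K M} (w : Fin ((t + 1) / 2) → N)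

def halfExtend (j : Fin (t + 1)) : M :=
  if h : (j : ℕ) < (t + 1) / 2 then w ⟨j, h⟩ else 0

theorem halfExtend_mem (j : Fin (t + 1)) : halfExtend w j ∈ N := by
  unfold halfExtend; split_ifs <;> simp

theorem halfExtend_castLE (i : Fin ((t + 1) / 2)) :
    halfExtend w (Fin.castLE (Nat.div_le_self _ _) i) = w i :=
  dif_pos i.2

theorem halfExtend_rev_castLE (i : Fin ((t + 1) / 2)) :
    halfExtend w (Fin.castLE (Nat.div_le_self _ _) i).rev = 0 :=
  dif_neg (by simp only [Fin.val_rev, Fin.val_castLE]; omega)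

def revOddOfHalf : revOdd t N :=
  ⟨fun j => halfExtend w j - halfExtend w j.rev,
    fun j => ⟨N.sub_mem (halfExtend_mem w _) (halfExtend_mem w _), by simp⟩⟩

end HalfExtend

variable [IsAddTorsionFree M]

theorem eq_zero_of_mem_revOdd {t : ℕ} {N : Submodule K M} {v : Fin (t + 1) → M}
    (hv : v ∈ revOdd t N) (h : ∀ j : Fin (t + 1), (j : ℕ) < (t + 1) / 2 → v j = 0) : v = 0 := by
  funext j
  by_cases hj : (j : ℕ) < (t + 1) / 2
  · exact h j hj
  by_cases hjr : (j.rev : ℕ) < (t + 1) / 2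
  · rw [← Fin.rev_rev j, (hv j.rev).2, h _ hjr, neg_zero, Pi.zero_apply]
  · have hrev : j.rev = j := Fin.ext (by simp only [Fin.val_rev] at *; omega)
    have := (hv j).2
    rwa [hrev, self_eq_neg] at this

def revOddEquiv (t : ℕ) (N : Submodule K M) : revOdd t N ≃ₗ[K] (Fin ((t + 1) / 2) → N) where
  toFun v i := ⟨v.1 (Fin.castLE (Nat.div_le_self _ _) i), (v.2 _).1⟩
  map_add' _ _ := rfl
  map_smul' _ _ := rfl
  invFun := revOddOfHalf
  left_inv v := by
    refine Subtype.ext <| sub_eq_zero.mp <| eq_zero_of_mem_revOdd (sub_mem (revOddOfHalf _).2 v.2)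
      fun j hj => ?_
    obtain ⟨i, rfl⟩ : ∃ i : Fin ((t + 1) / 2), Fin.castLE (Nat.div_le_self _ _) i = j :=
      ⟨⟨j, hj⟩, rfl⟩
    simp [revOddOfHalf, halfExtend_castLE, halfExtend_rev_castLE]
  right_inv w := by
    funext i
    ext
    simp [revOddOfHalf, halfExtend_castLE, halfExtend_rev_castLE]

end RevOdd

theorem finrank_revOdd {K M : Type*} [DivisionRing K] [AddCommGroup M] [Module K M]
    [IsAddTorsionFree M] [FiniteDimensional K M] (t : ℕ) (N : Submodule K M) :
    Module.finrank K (revOdd t N) = (t + 1) / 2 * Module.finrank K N := by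
  simp [(revOddEquiv t N).finrank_eq, Module.finrank_pi_fintype]

theorem mem_revOdd_revOdd_iff {K : Type*} [Ring K] {r m : ℕ}
    {g : Fin (r + 1) → Fin (m + 1) → K} :
    g ∈ revOdd r (revOdd m (⊤ : Submodule K K)) ↔ ∀ j k,
      g j k = -g j.rev k ∧ g j k = -g j k.rev ∧ g j k = g j.rev k.rev := by
  simp only [mem_revOdd, Submodule.mem_top, true_and, funext_iff, Pi.neg_apply]
  constructor
  · intro h j k
    obtain ⟨hk, hj⟩ := h j
    exact ⟨by rw [hj, neg_neg], by rw [hk, neg_neg], by rw [(h j.rev).1, hj, neg_neg]⟩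
  · intro h j
    exact ⟨fun k => by rw [(h j k).2.1, neg_neg], fun k => by rw [(h j k).1, neg_neg]⟩

theorem stmt19_general (n r : ℕ)
    (T : (Fin (r + 1) → Fin (n - r + 1) → ℝ) →ₗ[ℝ] MvPolynomial (Fin 2) ℝ)
    (hT : ∀ g, T g = ∑ j : Fin (r + 1), ∑ k : Fin (n - r + 1),
        C (g j k) * (X 0 + X 1) ^ (j : ℕ) * (1 + X 0) ^ (r - (j : ℕ)) *
          (X 1) ^ (k : ℕ))
    (G : Submodule ℝ (Fin (r + 1) → Fin (n - r + 1) → ℝ))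
    (hG : ∀ g, g ∈ G ↔ ∀ (j : Fin (r + 1)) (k : Fin (n - r + 1)),
      g j k = -g j.rev k ∧ g j k = -g j k.rev ∧ g j k = g j.rev k.rev) :
    (∀ g ∈ G, T g = 0 → g = 0) ∧
    Module.finrank ℝ (Submodule.map T G) = ((r + 1) / 2) * ((n - r + 1) / 2) := by
  have hTinj : Function.Injective T :=
    (injective_iff_map_eq_zero T).mpr fun g h => polyT_eq_zero ((hT g).symm.trans h)
  have hG' : G = revOdd r (revOdd (n - r) ⊤) := by
    ext g
    rw [hG, mem_revOdd_revOdd_iff]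
  refine ⟨fun g _ h => hTinj (h.trans (map_zero T).symm), ?_⟩
  rw [← (Submodule.equivMapOfInjective T hTinj G).finrank_eq, hG', finrank_revOdd,
    finrank_revOdd, finrank_top, Module.finrank_self, mul_one]

/-- The linear map `T` sending a matrix `g` to
`∑_{j,k} g_{j,k} (x+y)^j (1+x)^{r−j} y^k` is injective on the subspace `𝔊` of
matrices satisfying the skew-symmetries, and `T(𝔊)` has dimension
`⌊(r+1)/2⌋·⌊(n−r+1)/2⌋`. -/
theorem stmt19 (n r : ℕ) (hrn : r ≤ n)
    (T : (Fin (r + 1) → Fin (n - r + 1) → ℝ) →ₗ[ℝ] MvPolynomial (Fin 2) ℝ)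
    (hT : ∀ g, T g = ∑ j : Fin (r + 1), ∑ k : Fin (n - r + 1),
        C (g j k) * (X 0 + X 1) ^ (j : ℕ) * (1 + X 0) ^ (r - (j : ℕ)) *
          (X 1) ^ (k : ℕ))
    (G : Submodule ℝ (Fin (r + 1) → Fin (n - r + 1) → ℝ))
    (hG : ∀ g, g ∈ G ↔ ∀ (j : Fin (r + 1)) (k : Fin (n - r + 1)),
      g j k = -g j.rev k ∧ g j k = -g j k.rev ∧ g j k = g j.rev k.rev) :
    (∀ g ∈ G, T g = 0 → g = 0) ∧
    Module.finrank ℝ (Submodule.map T G) = ((r + 1) / 2) * ((n - r + 1) / 2) :=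
  stmt19_general n r T hT G hG
end
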